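/- Fix 0 < α < 1 and set a_k = ∏_{i=1}^{k} (1 − (i+1)^{−α}) for k ≥ 1. Then lim_{k→∞} (log((a_k − a_{k+1})/2))/(log a_k) = 1 and lim_{k→∞} (log((a_{k−1} − a_k)/2))/(log((a_k − a_{k+1})/2)) = 1. Moreover the gap sequence {a_k − a_{k+1}}_k is decreasing. -/

import Mathlib

open Filter Topology Metric Set

/-- `a_k = ∏_{i=1}^k (1 - (i+1)^(-α))`; note `a_0 = 1` (empty product). -/
noncomputable def aSeq (α : ℝ) (k : ℕ) : ℝ :=
  ∏ i ∈ Finset.Icc 1 k, (1 - ((i : ℝ) + 1) ^ (-α))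

/-- The countable compact set `E = {0, 1, a_1, a_2, …}`. -/
noncomputable def aSet (α : ℝ) : Set ℝ :=
  insert (0 : ℝ) (insert 1 {x : ℝ | ∃ k : ℕ, 1 ≤ k ∧ x = aSeq α k})

/-!
Since `log (1 - x) ≤ -x`, we have `-log a_k ≥ ∑_{i ≤ k} (i+1)^(-α) ≥ (k+2)^(1-α) / 3`. Writing
`g_k = a_k - a_{k+1} = a_k (k+2)^(-α)`, the correction `log (g_k / 2) - log a_k = -α log (k+2) - log 2`
is therefore negligible against `log a_k`, which gives the first limit. Moreover
`log g_k - log g_{k+1} = -log (1 - (k+2)^(-α)) + α (log (k+3) - log (k+2)) → 0` while `log (g_k / 2)`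
diverges, which gives the second.
-/

open Asymptotics Real

theorem tendsto_div_succ_of_tendsto_sub_succ {u : ℕ → ℝ}
    (hu : Tendsto (fun n => ‖u n‖) atTop atTop)
    (hd : Tendsto (fun n => u n - u (n + 1)) atTop (𝓝 0)) :
    Tendsto (fun n => u n / u (n + 1)) atTop (𝓝 1) := by
  have hu_succ : Tendsto (fun n => ‖u (n + 1)‖) atTop atTop := hu.comp (tendsto_add_atTop_nat 1)
  have hequiv : u ~[atTop] fun n => u (n + 1) :=
    (hd.isBigO_one ℝ).trans_isLittleO ((isLittleO_one_left_iff ℝ).2 hu_succ)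
  refine (isEquivalent_iff_tendsto_one ?_).1 hequiv
  filter_upwards [hu_succ.eventually_gt_atTop 0] with n hn using norm_pos_iff.1 hn

theorem one_sub_rpow_neg_pos {x α : ℝ} (hx : 1 < x) (hα : 0 < α) : 0 < 1 - x ^ (-α) :=
  sub_pos.2 (rpow_lt_one_of_one_lt_of_neg hx (neg_neg_of_pos hα))

section aSeq

variable {α : ℝ}

theorem aSeq_succ (k : ℕ) :
    aSeq α (k + 1) = aSeq α k * (1 - ((k : ℝ) + 2) ^ (-α)) := by
  rw [aSeq, Finset.prod_Icc_succ_top (Nat.le_add_left 1 k)]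
  congr 3
  push_cast
  ring

theorem aSeq_pos (hα : 0 < α) (k : ℕ) : 0 < aSeq α k :=
  Finset.prod_pos fun i hi =>
    one_sub_rpow_neg_pos (by have := (Finset.mem_Icc.1 hi).1; norm_cast; omega) hα

theorem aSeq_sub_aSeq_succ (k : ℕ) :
    aSeq α k - aSeq α (k + 1) = aSeq α k * ((k : ℝ) + 2) ^ (-α) := by
  rw [aSeq_succ]
  ring

theorem strictAnti_aSeq_sub_aSeq_succ (hα : 0 < α) :
    StrictAnti fun k => aSeq α k - aSeq α (k + 1) := by
  refine strictAnti_nat_of_succ_lt fun k => ?_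
  have hrpow_pos : 0 < ((k : ℝ) + 2) ^ (-α) := by positivity
  have haSeq_succ_le : aSeq α (k + 1) ≤ aSeq α k := by
    rw [aSeq_succ]
    exact mul_le_of_le_one_right (aSeq_pos hα k).le (by linarith)
  have hrpow_lt : ((k : ℝ) + 3) ^ (-α) < ((k : ℝ) + 2) ^ (-α) :=
    rpow_lt_rpow_of_neg (by positivity) (by linarith) (neg_neg_of_pos hα)
  simp only [aSeq_sub_aSeq_succ]
  push_cast
  rw [show (k : ℝ) + 1 + 2 = k + 3 by ring]
  exact mul_lt_mul' haSeq_succ_le hrpow_lt (by positivity) (aSeq_pos hα k)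

theorem log_aSeq_le_neg_sum (hα : 0 < α) (k : ℕ) :
    log (aSeq α k) ≤ -∑ i ∈ Finset.Icc 1 k, ((i : ℝ) + 1) ^ (-α) := by
  have hfac_pos : ∀ i ∈ Finset.Icc 1 k, 0 < 1 - ((i : ℝ) + 1) ^ (-α) := fun i hi =>
    one_sub_rpow_neg_pos (by have := (Finset.mem_Icc.1 hi).1; norm_cast; omega) hα
  rw [aSeq, log_prod fun i hi => (hfac_pos i hi).ne', ← Finset.sum_neg_distrib]
  refine Finset.sum_le_sum fun i hi => ?_
  linarith [log_le_sub_one_of_pos (hfac_pos i hi)]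

theorem rpow_one_sub_le_neg_log_aSeq (hα : 0 < α) {k : ℕ} (hk : 1 ≤ k) :
    ((k : ℝ) + 2) ^ (1 - α) ≤ 3 * -log (aSeq α k) := by
  have hk' : (1 : ℝ) ≤ k := by exact_mod_cast hk
  have hrpow_pos : 0 < ((k : ℝ) + 2) ^ (-α) := by positivity
  calc ((k : ℝ) + 2) ^ (1 - α) = ((k : ℝ) + 2) * ((k : ℝ) + 2) ^ (-α) := by
        rw [sub_eq_neg_add, rpow_add_one (by positivity), mul_comm]
    _ ≤ 3 * (k * ((k : ℝ) + 2) ^ (-α)) := by nlinarith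
    _ = 3 * ∑ _i ∈ Finset.Icc 1 k, ((k : ℝ) + 2) ^ (-α) := by simp
    _ ≤ 3 * ∑ i ∈ Finset.Icc 1 k, ((i : ℝ) + 1) ^ (-α) := by
        refine mul_le_mul_of_nonneg_left (Finset.sum_le_sum fun i hi => ?_) (by norm_num)
        have : (i : ℝ) ≤ k := by exact_mod_cast (Finset.mem_Icc.1 hi).2
        exact rpow_le_rpow_of_nonpos (by positivity) (by linarith) (by linarith)
    _ ≤ 3 * -log (aSeq α k) := by linarith [log_aSeq_le_neg_sum hα k]

theorem isBigO_rpow_one_sub_log_aSeq (hα : 0 < α) :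
    (fun k : ℕ => ((k : ℝ) + 2) ^ (1 - α)) =O[atTop] fun k => log (aSeq α k) := by
  refine IsBigO.of_bound 3 ?_
  filter_upwards [eventually_ge_atTop 1] with k hk
  have hbound := rpow_one_sub_le_neg_log_aSeq hα hk
  have hrpow_nonneg : 0 ≤ ((k : ℝ) + 2) ^ (1 - α) := by positivity
  rw [norm_of_nonneg hrpow_nonneg, norm_of_nonpos (by linarith)]
  linarith

theorem tendsto_log_aSeq_atBot (hα0 : 0 < α) (hα1 : α < 1) :
    Tendsto (fun k => log (aSeq α k)) atTop atBot := by
  have hrpow : Tendsto (fun k : ℕ => ((k : ℝ) + 2) ^ (1 - α) / 3) atTop atTop :=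
    ((tendsto_rpow_atTop (by linarith)).comp
      (tendsto_atTop_add_const_right atTop 2 tendsto_natCast_atTop_atTop)).atTop_div_const
      (by norm_num)
  refine tendsto_neg_atTop_iff.1 (tendsto_atTop_mono' atTop ?_ hrpow)
  filter_upwards [eventually_ge_atTop 1] with k hk
  linarith [rpow_one_sub_le_neg_log_aSeq hα0 hk]

theorem log_half_gap_eq (hα : 0 < α) (k : ℕ) :
    log ((aSeq α k - aSeq α (k + 1)) / 2) =
      log (aSeq α k) - (α * log ((k : ℝ) + 2) + log 2) := by
  have hrpow_pos : 0 < ((k : ℝ) + 2) ^ (-α) := by positivity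
  rw [aSeq_sub_aSeq_succ, log_div (mul_pos (aSeq_pos hα k) hrpow_pos).ne' two_ne_zero,
    log_mul (aSeq_pos hα k).ne' hrpow_pos.ne', log_rpow (by positivity)]
  ring

theorem isLittleO_log_aSeq (hα0 : 0 < α) (hα1 : α < 1) :
    (fun k : ℕ => α * log ((k : ℝ) + 2) + log 2) =o[atTop] fun k => log (aSeq α k) := by
  have htop : Tendsto (fun k : ℕ => (k : ℝ) + 2) atTop atTop :=
    tendsto_atTop_add_const_right atTop 2 tendsto_natCast_atTop_atTop
  have hlog : (fun k : ℕ => log ((k : ℝ) + 2)) =o[atTop] fun k => ((k : ℝ) + 2) ^ (1 - α) :=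
    (isLittleO_log_rpow_atTop (by linarith)).comp_tendsto htop
  have hconst : (fun _ : ℕ => log 2) =o[atTop] fun k => ((k : ℝ) + 2) ^ (1 - α) :=
    isLittleO_const_left.2 <| .inr <|
      tendsto_norm_atTop_atTop.comp ((tendsto_rpow_atTop (by linarith)).comp htop)
  exact ((hlog.const_mul_left α).add hconst).trans_isBigO (isBigO_rpow_one_sub_log_aSeq hα0)

theorem isEquivalent_log_half_gap (hα0 : 0 < α) (hα1 : α < 1) :
    (fun k => log ((aSeq α k - aSeq α (k + 1)) / 2)) ~[atTop] fun k => log (aSeq α k) :=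
  (IsEquivalent.refl.sub_isLittleO (isLittleO_log_aSeq hα0 hα1)).congr_left <|
    .of_forall fun k => (log_half_gap_eq hα0 k).symm

theorem log_half_gap_sub_succ (hα : 0 < α) (k : ℕ) :
    log ((aSeq α k - aSeq α (k + 1)) / 2) - log ((aSeq α (k + 1) - aSeq α (k + 2)) / 2) =
      α * (log ((k : ℝ) + 3) - log ((k : ℝ) + 2)) - log (1 - ((k : ℝ) + 2) ^ (-α)) := by
  have hfac_pos : 0 < 1 - ((k : ℝ) + 2) ^ (-α) := one_sub_rpow_neg_pos (by norm_cast; omega) hα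
  rw [log_half_gap_eq hα, log_half_gap_eq hα, aSeq_succ,
    log_mul (aSeq_pos hα k).ne' hfac_pos.ne']
  push_cast
  ring_nf

theorem tendsto_log_half_gap_sub_succ (hα : 0 < α) :
    Tendsto (fun k => log ((aSeq α k - aSeq α (k + 1)) / 2) -
      log ((aSeq α (k + 1) - aSeq α (k + 2)) / 2)) atTop (𝓝 0) := by
  have hshift : Tendsto (fun k : ℕ => log ((k : ℝ) + 3) - log ((k : ℝ) + 2)) atTop (𝓝 0) := by
    convert tendsto_log_nat_add_one_sub_log.comp (tendsto_add_atTop_nat 2) using 2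
    simp only [Function.comp_apply]
    push_cast
    ring_nf
  have hrpow : Tendsto (fun k : ℕ => ((k : ℝ) + 2) ^ (-α)) atTop (𝓝 0) :=
    (tendsto_rpow_neg_atTop hα).comp
      (tendsto_atTop_add_const_right atTop 2 tendsto_natCast_atTop_atTop)
  have hlog_fac : Tendsto (fun k : ℕ => log (1 - ((k : ℝ) + 2) ^ (-α))) atTop (𝓝 0) := by
    have hfac : Tendsto (fun k : ℕ => 1 - ((k : ℝ) + 2) ^ (-α)) atTop (𝓝 1) := by
      simpa using hrpow.const_sub 1
    simpa [Function.comp_def] using (continuousAt_log one_ne_zero).tendsto.comp hfac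
  simp_rw [log_half_gap_sub_succ hα]
  simpa using (hshift.const_mul α).sub hlog_fac

end aSeq

/-- For `0 < α < 1` and `a_k = ∏_{i=1}^k (1 - (i+1)^(-α))`:
`lim_{k→∞} log ((a_k - a_{k+1})/2) / log a_k = 1`,
`lim_{k→∞} log ((a_{k-1} - a_k)/2) / log ((a_k - a_{k+1})/2) = 1`, and the gap sequence
`{a_k - a_{k+1}}_k` is decreasing. -/
theorem aSeq_gap_limits (α : ℝ) (hα0 : 0 < α) (hα1 : α < 1) :
    Filter.Tendsto
      (fun k : ℕ => Real.log ((aSeq α k - aSeq α (k + 1)) / 2) / Real.log (aSeq α k))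
      Filter.atTop (𝓝 1) ∧
    Filter.Tendsto
      (fun k : ℕ => Real.log ((aSeq α (k - 1) - aSeq α k) / 2) /
        Real.log ((aSeq α k - aSeq α (k + 1)) / 2))
      Filter.atTop (𝓝 1) ∧
    StrictAnti (fun k : ℕ => aSeq α k - aSeq α (k + 1)) := by
  have hequiv := isEquivalent_log_half_gap hα0 hα1
  have hlog_aSeq := tendsto_log_aSeq_atBot hα0 hα1
  have hlog_gap := hequiv.symm.tendsto_atBot hlog_aSeq
  refine ⟨(isEquivalent_iff_tendsto_one ?_).1 hequiv, ?_, strictAnti_aSeq_sub_aSeq_succ hα0⟩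
  · filter_upwards [hlog_aSeq.eventually_lt_atBot 0] with k hk using hk.ne
  · refine ((tendsto_div_succ_of_tendsto_sub_succ (tendsto_abs_atBot_atTop.comp hlog_gap)
      (tendsto_log_half_gap_sub_succ hα0)).comp (tendsto_sub_atTop_nat 1)).congr' ?_
    filter_upwards [eventually_ge_atTop 1] with k hk
    simp [Nat.sub_add_cancel hk]
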